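/- For any element w of a finite real reflection group W acting on an ℓ-dimensional Euclidean space V, the reflection length l_T(w) equals ℓ − dim F(w), where F(w) is the fixed subspace of w. -/

import Mathlib

open scoped RealInnerProductSpace
open Module

noncomputable section

variable {V : Type*} [NormedAddCommGroup V] [InnerProductSpace ℝ V]

/-- `g` acts as the orthogonal reflection in the hyperplane orthogonal to `α`. -/
def reflFormula (α : V) (g : V ≃ₗᵢ[ℝ] V) : Prop :=
  ∀ v, g v = v - (2 * ⟪α, v⟫ / ⟪α, α⟫) • α

/-- `g` is an orthogonal reflection. -/
def IsReflection (g : V ≃ₗᵢ[ℝ] V) : Prop :=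
  ∃ α : V, α ≠ 0 ∧ reflFormula α g

/-- A finite real reflection group: a finite subgroup of the orthogonal group
generated by its reflections. -/
def IsReflectionGroup (W : Subgroup (V ≃ₗᵢ[ℝ] V)) : Prop :=
  Finite W ∧ Subgroup.closure {g | g ∈ W ∧ IsReflection g} = W

/-- Reflection length: the least `k` such that `w` is a product of `k` reflections. -/
def refLen (W : Subgroup (V ≃ₗᵢ[ℝ] V)) (w : W) : ℕ :=
  sInf {k | ∃ l : List W, l.length = k ∧ (∀ t ∈ l, IsReflection (t : W).1) ∧ l.prod = w}

/-- The absolute order on `W`. -/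
def absLe (W : Subgroup (V ≃ₗᵢ[ℝ] V)) (u v : W) : Prop :=
  refLen W u + refLen W (u⁻¹ * v) = refLen W v

/-- Covering relation of the absolute order. -/
def covers (W : Subgroup (V ≃ₗᵢ[ℝ] V)) (u v : W) : Prop :=
  absLe W u v ∧ u ≠ v ∧ ∀ z, absLe W u z → absLe W z v → z = u ∨ z = v

/-- The fixed subspace of an isometry. -/
def fixedSpace (g : V ≃ₗᵢ[ℝ] V) : Submodule ℝ V where
  carrier := {v | g v = v}
  add_mem' := by
    intro a b ha hb
    simp only [Set.mem_setOf_eq, map_add] at *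
    rw [ha, hb]
  zero_mem' := by simp
  smul_mem' := by
    intro c a ha
    simp only [Set.mem_setOf_eq, map_smul] at *
    rw [ha]

/-- A root system for the reflection group `W`. -/
def IsRootSystemFor (W : Subgroup (V ≃ₗᵢ[ℝ] V)) (Φ : Set V) : Prop :=
  Φ.Finite ∧ (∀ α ∈ Φ, α ≠ 0) ∧ (∀ α ∈ Φ, -α ∈ Φ) ∧
  (∀ α ∈ Φ, ∀ c : ℝ, c • α ∈ Φ → c = 1 ∨ c = -1) ∧
  (∀ α ∈ Φ, ∃ t ∈ W, reflFormula α t) ∧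
  (∀ t ∈ W, IsReflection t → ∃ α ∈ Φ, reflFormula α t) ∧
  (∀ g ∈ W, ∀ α ∈ Φ, g α ∈ Φ)

/-- A simple system for `Φ`: roots `σ 1, …, σ ℓ` which are linearly independent and
such that every root is a nonnegative or nonpositive combination of them. -/
def IsSimpleSystem (Φ : Set V) {ℓ : ℕ} (σ : Fin ℓ → V) : Prop :=
  (∀ i, σ i ∈ Φ) ∧ LinearIndependent ℝ σ ∧
  ∀ α ∈ Φ, (∃ c : Fin ℓ → ℝ, (∀ i, 0 ≤ c i) ∧ α = ∑ i, c i • σ i) ∨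
           (∃ c : Fin ℓ → ℝ, (∀ i, 0 ≤ c i) ∧ -α = ∑ i, c i • σ i)

/-- `γ` is a Coxeter element of `W`: a product, in some order, of the reflections in
the `ℓ` simple roots of some simple system of the root system `Φ`. -/
def IsCoxeterElement (W : Subgroup (V ≃ₗᵢ[ℝ] V)) (Φ : Set V) (ℓ : ℕ) (γ : W) : Prop :=
  ∃ σ : Fin ℓ → V, IsSimpleSystem Φ σ ∧
    ∃ t : Fin ℓ → W, (∀ i, reflFormula (σ i) (t i).1) ∧
      ∃ l : List (Fin ℓ), l.Nodup ∧ (∀ i, i ∈ l) ∧ (l.map t).prod = γ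

/-- `l` is a maximal (saturated) chain from `u` to `v` in the absolute order. -/
def IsMaximalChain (W : Subgroup (V ≃ₗᵢ[ℝ] V)) (u v : W) (l : List W) : Prop :=
  l.head? = some u ∧ l.getLast? = some v ∧ l.Chain' (covers W)

/-- The label of a chain under the natural edge labeling `λ (x, y) = x⁻¹ * y`. -/
def chainLabels (W : Subgroup (V ≃ₗᵢ[ℝ] V)) (l : List W) : List W :=
  l.zipWith (fun x y => x⁻¹ * y) l.tail

end

/-!
The lower bound `ℓ - dim F(w) ≤ l_T(w)` holds for arbitrary orthogonal maps: a reflection fixes a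
hyperplane and `codim F(gh) ≤ codim F(g) + codim F(h)`.

For the upper bound, suppose `w ≠ 1` and some root `α` of `W` is orthogonal to `F(w)`. Since
`F(w)ᗮ` is the range of `w - 1` we may take `α = w v - v`; as `‖w v‖ = ‖v‖`, the reflection `t`
in `α` swaps `w v` and `v`, so `F(t w)` contains `F(w)` and `v`. Induction on the codimension
then writes `w` as a product of at most `ℓ - dim F(w)` reflections.

If no root were orthogonal to `F(w)`, some `x ∈ F(w)` would lie on no reflecting hyperplane.
Then `w = 1` by the classical simple-system argument: the minimal generators `Δ` of the cone
spanned by the positive roots `P = {α | ⟪α, x⟫ > 0}` are roots whose reflections permute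
`P \ {α}` and generate `W`, and a shortest word in them for an element fixing `x` could be
shortened by the deletion argument.
-/

section

variable {V : Type*} [NormedAddCommGroup V] [InnerProductSpace ℝ V]

theorem reflection_orthogonal_singleton_apply (α v : V) :
    (ℝ ∙ α)ᗮ.reflection v = v - (2 * ⟪α, v⟫ / ⟪α, α⟫) • α := by
  rw [Submodule.reflection_orthogonal_apply, Submodule.reflection_singleton_apply,
    real_inner_self_eq_norm_sq, neg_sub, ← Nat.cast_smul_eq_nsmul ℝ, smul_smul, mul_div_assoc]
  simp

theorem reflection_orthogonal_singleton_apply_of_norm_eq_one {α : V} (hα : ‖α‖ = 1) (v : V) :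
    (ℝ ∙ α)ᗮ.reflection v = v - (2 * ⟪α, v⟫) • α := by
  rw [reflection_orthogonal_singleton_apply, real_inner_self_eq_norm_sq, hα]
  simp

theorem reflection_orthogonal_singleton_smul {c : ℝ} (hc : c ≠ 0) (α : V) :
    (ℝ ∙ c • α)ᗮ.reflection = (ℝ ∙ α)ᗮ.reflection := by
  ext v
  rcases eq_or_ne α 0 with rfl | hα
  · simp
  simp only [reflection_orthogonal_singleton_apply, real_inner_smul_left, real_inner_smul_right,
    smul_smul]
  congr 2
  field_simp [inner_self_ne_zero.2 hα]

theorem reflection_orthogonal_singleton_neg (α : V) :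
    (ℝ ∙ -α)ᗮ.reflection = (ℝ ∙ α)ᗮ.reflection := by
  simpa using reflection_orthogonal_singleton_smul (neg_ne_zero.2 one_ne_zero) α

theorem reflection_orthogonal_singleton_map (g : V ≃ₗᵢ[ℝ] V) (α : V) :
    (ℝ ∙ g α)ᗮ.reflection = g * (ℝ ∙ α)ᗮ.reflection * g⁻¹ := by
  ext v
  obtain ⟨u, rfl⟩ := g.surjective v
  simp [reflection_orthogonal_singleton_apply, LinearIsometryEquiv.inner_map_map]

theorem eq_or_eq_neg_of_reflection_eq {α β : V} (hα : ‖α‖ = 1) (hβ : ‖β‖ = 1)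
    (h : (ℝ ∙ β)ᗮ.reflection = (ℝ ∙ α)ᗮ.reflection) : β = α ∨ β = -α := by
  have hβα : β = ⟪α, β⟫ • α := by
    have := Submodule.reflection_orthogonalComplement_singleton_eq_neg (𝕜 := ℝ) β
    rw [h, reflection_orthogonal_singleton_apply_of_norm_eq_one hα] at this
    linear_combination (norm := module) (2⁻¹ : ℝ) • this
  have hc : 1 = |⟪α, β⟫| := by
    simpa [hα, hβ, norm_smul] using congrArg norm hβα
  rcases abs_eq zero_le_one |>.1 hc.symm with h1 | h1
  · left; rw [hβα, h1, one_smul]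
  · right; rw [hβα, h1, neg_one_smul]

theorem reflFormula_iff {α : V} {t : V ≃ₗᵢ[ℝ] V} :
    reflFormula α t ↔ t = (ℝ ∙ α)ᗮ.reflection := by
  simp only [reflFormula, LinearIsometryEquiv.ext_iff, reflection_orthogonal_singleton_apply]

theorem isReflection_iff {t : V ≃ₗᵢ[ℝ] V} :
    IsReflection t ↔ ∃ α : V, ‖α‖ = 1 ∧ t = (ℝ ∙ α)ᗮ.reflection := by
  simp only [IsReflection, reflFormula_iff]
  constructor
  · rintro ⟨α, hα, rfl⟩
    refine ⟨‖α‖⁻¹ • α, norm_smul_inv_norm hα, ?_⟩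
    rw [reflection_orthogonal_singleton_smul (inv_ne_zero (norm_ne_zero_iff.2 hα))]
  · rintro ⟨α, hα, rfl⟩
    exact ⟨α, norm_ne_zero_iff.1 (by simp [hα]), rfl⟩

theorem fixedSpace_one : fixedSpace (1 : V ≃ₗᵢ[ℝ] V) = ⊤ :=
  eq_top_iff.2 fun _ _ ↦ rfl

theorem fixedSpace_reflection (K : Submodule ℝ V) [K.HasOrthogonalProjection] :
    fixedSpace K.reflection = K := by
  ext v
  exact K.reflection_eq_self_iff v

theorem fixedSpace_inf_le_fixedSpace_mul (g h : V ≃ₗᵢ[ℝ] V) :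
    fixedSpace g ⊓ fixedSpace h ≤ fixedSpace (g * h) := by
  rintro v ⟨hg, hh⟩
  change g (h v) = v
  rw [show h v = v from hh, show g v = v from hg]

theorem finrank_fixedSpace_add_one_of_isReflection [FiniteDimensional ℝ V]
    {t : V ≃ₗᵢ[ℝ] V} (ht : IsReflection t) :
    finrank ℝ (fixedSpace t) + 1 = finrank ℝ V := by
  obtain ⟨α, hα, rfl⟩ := isReflection_iff.1 ht
  rw [fixedSpace_reflection, add_comm,
    ← finrank_span_singleton (K := ℝ) (ne_zero_of_norm_ne_zero (a := α) (by simp [hα]))]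
  exact (ℝ ∙ α).finrank_add_finrank_orthogonal

theorem finrank_fixedSpace_add_finrank_fixedSpace_le [FiniteDimensional ℝ V]
    (g h : V ≃ₗᵢ[ℝ] V) :
    finrank ℝ (fixedSpace g) + finrank ℝ (fixedSpace h) ≤
      finrank ℝ (fixedSpace (g * h)) + finrank ℝ V := by
  rw [← Submodule.finrank_sup_add_finrank_inf_eq, add_comm]
  exact add_le_add (Submodule.finrank_mono (fixedSpace_inf_le_fixedSpace_mul g h))
    (Submodule.finrank_le _)

theorem finrank_le_finrank_fixedSpace_prod_add_length [FiniteDimensional ℝ V]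
    (l : List (V ≃ₗᵢ[ℝ] V)) (hl : ∀ t ∈ l, IsReflection t) :
    finrank ℝ V ≤ finrank ℝ (fixedSpace l.prod) + l.length := by
  induction l with
  | nil => rw [List.prod_nil, fixedSpace_one, finrank_top]; simp
  | cons t l ih =>
    have ht := finrank_fixedSpace_add_one_of_isReflection (hl t List.mem_cons_self)
    have hmul := finrank_fixedSpace_add_finrank_fixedSpace_le t l.prod
    have := ih fun s hs ↦ hl s (List.mem_cons_of_mem t hs)
    rw [List.prod_cons, List.length_cons]
    omega

theorem ker_sub_id_eq_fixedSpace (g : V ≃ₗᵢ[ℝ] V) :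
    LinearMap.ker ((g.toLinearEquiv : V →ₗ[ℝ] V) - LinearMap.id) = fixedSpace g := by
  ext v
  simp [sub_eq_zero, fixedSpace]

theorem range_sub_id_eq_orthogonal_fixedSpace [FiniteDimensional ℝ V] (g : V ≃ₗᵢ[ℝ] V) :
    LinearMap.range ((g.toLinearEquiv : V →ₗ[ℝ] V) - LinearMap.id) = (fixedSpace g)ᗮ := by
  refine Submodule.eq_of_le_of_finrank_eq ?_ ?_
  · rintro _ ⟨v, rfl⟩
    refine (Submodule.mem_orthogonal' _ _).2 fun u (hu : g u = u) ↦ ?_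
    simp [inner_sub_left, ← g.inner_map_map v u, hu]
  · have := LinearMap.finrank_range_add_finrank_ker
      ((g.toLinearEquiv : V →ₗ[ℝ] V) - LinearMap.id)
    have := (fixedSpace g).finrank_add_finrank_orthogonal
    rw [ker_sub_id_eq_fixedSpace] at *
    omega

theorem fixedSpace_lt_fixedSpace_reflection_mul (g : V ≃ₗᵢ[ℝ] V) {v : V} (hv : g v ≠ v) :
    fixedSpace g < fixedSpace ((ℝ ∙ (g v - v))ᗮ.reflection * g) := by
  refine SetLike.lt_iff_le_and_exists.2 ⟨fun u (hu : g u = u) ↦ ?_, v, ?_, hv⟩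
  · change (ℝ ∙ (g v - v))ᗮ.reflection (g u) = u
    rw [hu, Submodule.reflection_eq_self_iff, Submodule.mem_orthogonal_singleton_iff_inner_right,
      inner_sub_left, ← g.inner_map_map v u, hu, sub_self]
  · exact Submodule.reflection_sub (g.norm_map v)

section Cone

variable {E : Type*} [AddCommGroup E] [Module ℝ E]

structure IsConeBasis (P Δ : Finset E) : Prop where
  subset : Δ ⊆ P
  subset_hull : (P : Set E) ⊆ PointedCone.hull ℝ (Δ : Set E)
  notMem_hull_diff : ∀ δ ∈ Δ, δ ∉ PointedCone.hull ℝ ((Δ : Set E) \ {δ})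

theorem exists_isConeBasis (P : Finset E) : ∃ Δ, IsConeBasis P Δ := by
  classical
  obtain ⟨Δ, hΔ, hmin⟩ := Finset.exists_min_image
    (P.powerset.filter fun S : Finset E ↦ (P : Set E) ⊆ PointedCone.hull ℝ (S : Set E))
    Finset.card ⟨P, Finset.mem_filter.2 ⟨Finset.mem_powerset_self P, PointedCone.subset_hull⟩⟩
  rw [Finset.mem_filter, Finset.mem_powerset] at hΔ
  refine ⟨Δ, hΔ.1, hΔ.2, fun δ hδ hmem ↦ ?_⟩
  have hle : PointedCone.hull ℝ (Δ : Set E) ≤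
      PointedCone.hull ℝ ((Δ.erase δ : Finset E) : Set E) := by
    rw [Finset.coe_erase]
    refine Submodule.span_le.2 fun γ hγ ↦ ?_
    by_cases h : γ = δ
    · exact h ▸ hmem
    · exact PointedCone.subset_hull ⟨hγ, h⟩
  have := hmin (Δ.erase δ) (Finset.mem_filter.2
    ⟨Finset.mem_powerset.2 ((Δ.erase_subset δ).trans hΔ.1), hΔ.2.trans hle⟩)
  exact (Finset.card_erase_lt_of_mem hδ).not_ge this

theorem mem_hull_insert_iff {S : Set E} {α v : E} :
    v ∈ PointedCone.hull ℝ (insert α S) ↔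
      ∃ a : ℝ, 0 ≤ a ∧ ∃ w ∈ PointedCone.hull ℝ S, v = a • α + w := by
  rw [PointedCone.hull, Submodule.span_insert, Submodule.mem_sup]
  constructor
  · rintro ⟨_, hy, w, hw, rfl⟩
    obtain ⟨a, rfl⟩ := Submodule.mem_span_singleton.1 hy
    exact ⟨a, a.2, w, hw, rfl⟩
  · rintro ⟨a, ha, w, hw, rfl⟩
    exact ⟨(⟨a, ha⟩ : {c : ℝ // 0 ≤ c}) • α,
      Submodule.smul_mem _ _ (Submodule.mem_span_singleton_self α), w, hw, rfl⟩

end Cone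

theorem inner_nonneg_of_mem_hull {S : Set V} {y v : V} (hS : ∀ γ ∈ S, 0 ≤ ⟪γ, y⟫)
    (hv : v ∈ PointedCone.hull ℝ S) : 0 ≤ ⟪v, y⟫ := by
  induction hv using Submodule.span_induction with
  | mem γ hγ => exact hS γ hγ
  | zero => simp
  | add u w _ _ hu hw => rw [inner_add_left]; positivity
  | smul a u _ hu => exact (real_inner_smul_left u y a).symm ▸ mul_nonneg a.2 hu

theorem inner_pos_of_mem_hull {S : Set V} {x v : V} (hS : ∀ γ ∈ S, 0 < ⟪γ, x⟫)
    (hv : v ∈ PointedCone.hull ℝ S) (hv0 : v ≠ 0) : 0 < ⟪v, x⟫ := by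
  suffices v = 0 ∨ 0 < ⟪v, x⟫ from this.resolve_left hv0
  clear hv0
  induction hv using Submodule.span_induction with
  | mem γ hγ => exact Or.inr (hS γ hγ)
  | zero => exact Or.inl rfl
  | add u w _ _ hu hw =>
    rcases hu with rfl | hu
    · simpa using hw
    rcases hw with rfl | hw
    · simpa using Or.inr hu
    exact Or.inr (by rw [inner_add_left]; positivity)
  | smul a u _ hu =>
    rcases hu with rfl | hu
    · simp
    rcases a.2.eq_or_lt with ha | ha
    · left
      rw [show a = 0 from Subtype.ext ha.symm, zero_smul]
    · exact Or.inr ((real_inner_smul_left u x a).symm ▸ mul_pos ha hu)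

theorem exists_inner_pos_of_mem_hull {S : Set V} {v : V} (hv : v ∈ PointedCone.hull ℝ S)
    (hv0 : v ≠ 0) : ∃ γ ∈ S, 0 < ⟪γ, v⟫ := by
  by_contra! h
  have := inner_nonneg_of_mem_hull (y := -v) (fun γ hγ ↦ by simpa using h γ hγ) hv
  rw [inner_neg_right, neg_nonneg] at this
  exact hv0 (real_inner_self_nonpos.1 this)

/-- If `x` is positive on `P`, the ray through a minimal generator `α` is a face of the cone. -/
theorem IsConeBasis.exists_nonneg_smul_eq {P Δ : Finset V} (hΔ : IsConeBasis P Δ) {x : V}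
    (hx : ∀ γ ∈ P, 0 < ⟪γ, x⟫) {α β ρ : V} {c : ℝ} (hα : α ∈ Δ)
    (hβ : β ∈ PointedCone.hull ℝ (Δ : Set V)) (hρ : ρ ∈ PointedCone.hull ℝ (Δ : Set V))
    (h : β + ρ = c • α) : ∃ b : ℝ, 0 ≤ b ∧ β = b • α := by
  rw [← Set.insert_sdiff_self_of_mem (Finset.mem_coe.2 hα), mem_hull_insert_iff] at hβ hρ
  obtain ⟨a, ha, β', hβ', rfl⟩ := hβ
  obtain ⟨d, -, ρ', hρ', rfl⟩ := hρ
  have hsum : β' + ρ' = (c - a - d) • α := by rw [sub_smul, sub_smul, ← h]; abel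
  have hx' : ∀ γ ∈ (Δ : Set V) \ {α}, 0 < ⟪γ, x⟫ := fun γ hγ ↦ hx γ (hΔ.subset hγ.1)
  refine ⟨a, ha, ?_⟩
  suffices β' = 0 by rw [this, add_zero]
  by_contra hβ'0
  rcases lt_or_ge 0 (c - a - d) with hk | hk
  · refine hΔ.notMem_hull_diff α hα ?_
    convert Submodule.smul_mem _ (⟨_, inv_nonneg.2 hk.le⟩ : {c : ℝ // 0 ≤ c})
      (add_mem hβ' hρ') using 1
    change α = (c - a - d)⁻¹ • (β' + ρ')
    rw [hsum, smul_smul, inv_mul_cancel₀ hk.ne', one_smul]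
  · have h1 := inner_pos_of_mem_hull hx' hβ' hβ'0
    have h2 := inner_nonneg_of_mem_hull (fun γ hγ ↦ (hx' γ hγ).le) hρ'
    have h3 : ⟪β' + ρ', x⟫ = (c - a - d) * ⟪α, x⟫ := by rw [hsum, real_inner_smul_left]
    rw [inner_add_left] at h3
    nlinarith [hx α (hΔ.subset hα)]

structure IsPositiveSystem (W : Subgroup (V ≃ₗᵢ[ℝ] V)) (x : V) (P : Finset V) : Prop where
  mem_iff : ∀ α, α ∈ P ↔ ‖α‖ = 1 ∧ (ℝ ∙ α)ᗮ.reflection ∈ W ∧ 0 < ⟪α, x⟫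
  inner_ne_zero : ∀ α, ‖α‖ = 1 → (ℝ ∙ α)ᗮ.reflection ∈ W → ⟪α, x⟫ ≠ 0

theorem exists_list_prod_eq_of_mem_closure {G : Type*} [Group G] {S : Set G}
    (hS : ∀ s ∈ S, s⁻¹ ∈ S) {g : G} (hg : g ∈ Subgroup.closure S) :
    ∃ l : List G, (∀ s ∈ l, s ∈ S) ∧ l.prod = g := by
  rw [← Subgroup.mem_toSubmonoid, Subgroup.closure_toSubmonoid,
    Set.union_eq_left.2 fun s hs ↦ by simpa using hS _ hs] at hg
  exact Submonoid.exists_list_of_mem_closure hg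

def reflectionsOf (S : Set V) : Set (V ≃ₗᵢ[ℝ] V) :=
  (fun δ ↦ (ℝ ∙ δ)ᗮ.reflection) '' S

theorem reflectionsOf_inv_mem {S : Set V} {t : V ≃ₗᵢ[ℝ] V} (ht : t ∈ reflectionsOf S) :
    t⁻¹ ∈ reflectionsOf S := by
  obtain ⟨δ, hδ, rfl⟩ := ht
  exact ⟨δ, hδ, Submodule.reflection_inv.symm⟩

namespace IsPositiveSystem

variable {W : Subgroup (V ≃ₗᵢ[ℝ] V)} {x : V} {P Δ : Finset V} {α β : V} {g : V ≃ₗᵢ[ℝ] V}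
  (hP : IsPositiveSystem W x P)
include hP

theorem norm_eq_one (hα : α ∈ P) : ‖α‖ = 1 := ((hP.mem_iff α).1 hα).1

theorem reflection_mem (hα : α ∈ P) : (ℝ ∙ α)ᗮ.reflection ∈ W := ((hP.mem_iff α).1 hα).2.1

theorem inner_pos (hα : α ∈ P) : 0 < ⟪α, x⟫ := ((hP.mem_iff α).1 hα).2.2

theorem neg_notMem (hα : α ∈ P) : -α ∉ P := fun h ↦ by
  have := hP.inner_pos h
  rw [inner_neg_left] at this
  linarith [hP.inner_pos hα]

theorem mem_or_neg_mem (hα : ‖α‖ = 1) (hW : (ℝ ∙ α)ᗮ.reflection ∈ W) : α ∈ P ∨ -α ∈ P := by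
  rcases (hP.inner_ne_zero α hα hW).lt_or_gt with h | h
  · refine Or.inr ((hP.mem_iff _).2 ⟨by rwa [norm_neg], ?_, ?_⟩)
    · rwa [reflection_orthogonal_singleton_neg]
    · rw [inner_neg_left]; linarith
  · exact Or.inl ((hP.mem_iff α).2 ⟨hα, hW, h⟩)

theorem apply_mem_or_neg_mem (hg : g ∈ W) (hα : α ∈ P) : g α ∈ P ∨ -g α ∈ P := by
  refine hP.mem_or_neg_mem (by rw [g.norm_map, hP.norm_eq_one hα]) ?_
  rw [reflection_orthogonal_singleton_map]
  exact mul_mem (mul_mem hg (hP.reflection_mem hα)) (inv_mem hg)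

theorem apply_mem_of_apply_eq_self (hg : g ∈ W) (hgx : g x = x) (hα : α ∈ P) :
    g α ∈ P := by
  refine (hP.apply_mem_or_neg_mem hg hα).resolve_right fun h ↦ ?_
  have := hP.inner_pos h
  rw [inner_neg_left, ← hgx, g.inner_map_map] at this
  linarith [hP.inner_pos hα]

theorem reflection_apply_mem (hΔ : IsConeBasis P Δ) (hα : α ∈ Δ) (hβ : β ∈ P)
    (hne : β ≠ α) : (ℝ ∙ α)ᗮ.reflection β ∈ P := by
  have hαP := hΔ.subset hα
  refine (hP.apply_mem_or_neg_mem (hP.reflection_mem hαP) hβ).resolve_right fun h ↦ hne ?_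
  rw [reflection_orthogonal_singleton_apply_of_norm_eq_one (hP.norm_eq_one hαP)] at h
  obtain ⟨b, hb, rfl⟩ := hΔ.exists_nonneg_smul_eq (fun _ ↦ hP.inner_pos) hα
    (hΔ.subset_hull hβ) (hΔ.subset_hull h) (by abel : β + -(β - (2 * ⟪α, β⟫) • α) = _)
  have := hP.norm_eq_one hβ
  rw [norm_smul, hP.norm_eq_one hαP, mul_one, Real.norm_of_nonneg hb] at this
  rw [this, one_smul]

theorem reflectionsOf_subset (hΔ : IsConeBasis P Δ) : reflectionsOf (Δ : Set V) ⊆ W := by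
  rintro _ ⟨δ, hδ, rfl⟩
  exact hP.reflection_mem (hΔ.subset hδ)

theorem exists_mem_closure_apply_eq (hΔ : IsConeBasis P Δ) {β : V} (hβ : β ∈ P) :
    ∃ g ∈ Subgroup.closure (reflectionsOf (Δ : Set V)), ∃ δ ∈ Δ, g δ = β := by
  by_cases hβΔ : β ∈ Δ
  · exact ⟨1, one_mem _, β, hβΔ, rfl⟩
  have hβ0 : β ≠ 0 := ne_zero_of_norm_ne_zero (by simp [hP.norm_eq_one hβ])
  obtain ⟨α, hα, hαβ⟩ := exists_inner_pos_of_mem_hull (hΔ.subset_hull hβ) hβ0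
  have hβ' := hP.reflection_apply_mem hΔ hα hβ (ne_of_mem_of_not_mem hα hβΔ).symm
  obtain ⟨g, hg, δ, hδ, hgδ⟩ := exists_mem_closure_apply_eq hΔ hβ'
  refine ⟨(ℝ ∙ α)ᗮ.reflection * g, mul_mem (Subgroup.subset_closure ⟨α, hα, rfl⟩) hg,
    δ, hδ, ?_⟩
  rw [LinearIsometryEquiv.coe_mul, Function.comp_apply, hgδ, Submodule.reflection_reflection]
termination_by (P.filter fun γ ↦ ⟪γ, x⟫ < ⟪β, x⟫).card
decreasing_by
  have hlt : ⟪(ℝ ∙ α)ᗮ.reflection β, x⟫ < ⟪β, x⟫ := by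
    rw [reflection_orthogonal_singleton_apply_of_norm_eq_one (hP.norm_eq_one (hΔ.subset hα)),
      inner_sub_left, real_inner_smul_left]
    nlinarith [hP.inner_pos (hΔ.subset hα)]
  refine Finset.card_lt_card (Finset.ssubset_iff_of_subset ?_ |>.2 ?_)
  · intro γ hγ
    rw [Finset.mem_filter] at hγ ⊢
    exact ⟨hγ.1, hγ.2.trans hlt⟩
  · exact ⟨_, Finset.mem_filter.2 ⟨hβ', hlt⟩, fun h ↦ (Finset.mem_filter.1 h).2.false⟩

theorem le_closure_reflectionsOf (hΔ : IsConeBasis P Δ)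
    (hW : W ≤ Subgroup.closure {g | g ∈ W ∧ IsReflection g}) :
    W ≤ Subgroup.closure (reflectionsOf (Δ : Set V)) := by
  refine hW.trans (Subgroup.closure_le _ |>.2 ?_)
  rintro t ⟨htW, ht⟩
  obtain ⟨α, hα, rfl⟩ := isReflection_iff.1 ht
  obtain ⟨β, hβ, hβα⟩ : ∃ β ∈ P, (ℝ ∙ β)ᗮ.reflection = (ℝ ∙ α)ᗮ.reflection := by
    rcases hP.mem_or_neg_mem hα htW with h | h
    exacts [⟨α, h, rfl⟩, ⟨-α, h, reflection_orthogonal_singleton_neg α⟩]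
  obtain ⟨g, hg, δ, hδ, rfl⟩ := hP.exists_mem_closure_apply_eq hΔ hβ
  rw [SetLike.mem_coe, ← hβα, reflection_orthogonal_singleton_map]
  exact mul_mem (mul_mem hg (Subgroup.subset_closure ⟨δ, hδ, rfl⟩)) (inv_mem hg)

theorem exists_eq_append_cons_of_neg_mem (hΔ : IsConeBasis P Δ) (hβ : β ∈ P) :
    ∀ l : List (V ≃ₗᵢ[ℝ] V), (∀ t ∈ l, t ∈ reflectionsOf (Δ : Set V)) → -l.prod β ∈ P →
      ∃ l₁ l₂ δ, δ ∈ Δ ∧ l = l₁ ++ (ℝ ∙ δ)ᗮ.reflection :: l₂ ∧ l₂.prod β = δ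
  | [], _, h => absurd h (by simpa using hP.neg_notMem hβ)
  | t :: l, hl, h => by
    obtain ⟨δ, hδ, rfl⟩ := hl t List.mem_cons_self
    have hl' : ∀ s ∈ l, s ∈ reflectionsOf (Δ : Set V) :=
      fun s hs ↦ hl s (List.mem_cons_of_mem _ hs)
    have hlW : l.prod ∈ W := list_prod_mem fun s hs ↦ hP.reflectionsOf_subset hΔ (hl' s hs)
    rcases hP.apply_mem_or_neg_mem hlW hβ with h' | h'
    · refine ⟨[], l, δ, hδ, rfl, ?_⟩
      by_contra hne
      exact hP.neg_notMem (hP.reflection_apply_mem hΔ hδ h' hne) (by simpa using h)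
    · obtain ⟨l₁, l₂, γ, hγ, rfl, hγβ⟩ := exists_eq_append_cons_of_neg_mem hΔ hβ l hl' h'
      exact ⟨_ :: l₁, l₂, γ, hγ, rfl, hγβ⟩

theorem eq_one_of_apply_eq_self (hW : W ≤ Subgroup.closure {g | g ∈ W ∧ IsReflection g})
    (hg : g ∈ W) (hgx : g x = x) : g = 1 := by
  classical
  obtain ⟨Δ, hΔ⟩ := exists_isConeBasis P
  have hword : ∃ n, ∃ l : List (V ≃ₗᵢ[ℝ] V), l.length = n ∧
      (∀ t ∈ l, t ∈ reflectionsOf (Δ : Set V)) ∧ l.prod = g := by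
    obtain ⟨l, hl, rfl⟩ := exists_list_prod_eq_of_mem_closure (fun _ ↦ reflectionsOf_inv_mem)
      (hP.le_closure_reflectionsOf hΔ hW hg)
    exact ⟨_, l, rfl, hl, rfl⟩
  obtain ⟨l, hlen, hl, hprod⟩ := Nat.find_spec hword
  rcases l.eq_nil_or_concat' with rfl | ⟨l₀, t, rfl⟩
  · exact hprod.symm
  exfalso
  subst hprod
  obtain ⟨δ, hδ, rfl⟩ := hl t (by simp)
  have hneg : -l₀.prod δ ∈ P := by
    simpa [List.prod_append, Submodule.reflection_orthogonalComplement_singleton_eq_neg] using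
      hP.apply_mem_of_apply_eq_self hg hgx (hΔ.subset hδ)
  obtain ⟨l₁, l₂, γ, hγ, rfl, hγδ⟩ := hP.exists_eq_append_cons_of_neg_mem hΔ (hΔ.subset hδ) l₀
    (fun s hs ↦ hl s (by simp [hs])) hneg
  have hdel : (l₁ ++ l₂).prod =
      (l₁ ++ (ℝ ∙ γ)ᗮ.reflection :: l₂ ++ [(ℝ ∙ δ)ᗮ.reflection]).prod := by
    have hcomm : (ℝ ∙ γ)ᗮ.reflection * l₂.prod = l₂.prod * (ℝ ∙ δ)ᗮ.reflection := by
      rw [← hγδ, reflection_orthogonal_singleton_map, inv_mul_cancel_right]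
    simp only [List.prod_append, List.prod_cons, List.prod_nil, mul_one, mul_assoc]
    rw [← mul_assoc _ l₂.prod, hcomm, mul_assoc, Submodule.reflection_mul_reflection, mul_one]
  have hshorter := Nat.find_min' hword
    ⟨l₁ ++ l₂, rfl, fun s hs ↦ hl s (by
      simp only [List.mem_append, List.mem_cons] at hs ⊢; tauto), hdel⟩
  simp only [List.length_append, List.length_cons] at hlen hshorter
  omega

end IsPositiveSystem

theorem exists_mem_forall_inner_ne_zero (U : Submodule ℝ V) {S : Set V} (hS : S.Finite)
    (hSU : ∀ α ∈ S, α ∉ Uᗮ) : ∃ x ∈ U, ∀ α ∈ S, ⟪α, x⟫ ≠ 0 := by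
  have := hS.to_subtype
  have := Fintype.ofFinite S
  have hne (α : S) : (ℝ ∙ (α : V))ᗮ.comap U.subtype ≠ ⊤ := fun htop ↦ hSU α α.2 <|
    (Submodule.mem_orthogonal' _ _).2 fun u hu ↦ by
      have : (⟨u, hu⟩ : U) ∈ (ℝ ∙ (α : V))ᗮ.comap U.subtype := htop ▸ Submodule.mem_top
      exact Submodule.mem_orthogonal_singleton_iff_inner_right.1 this
  obtain ⟨⟨x, hxU⟩, hx⟩ := Set.ne_univ_iff_exists_notMem _ |>.1 <| Set.ssubset_univ_iff.1 <|
    Submodule.iUnion_ssubset_of_forall_ne_top_of_card_lt Finset.univ _ hne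
      (by simp [ENat.card_eq_top_of_infinite, hS])
  refine ⟨x, hxU, fun α hα hαx ↦ hx ?_⟩
  exact Set.mem_biUnion (Finset.mem_univ ⟨α, hα⟩)
    (Submodule.mem_orthogonal_singleton_iff_inner_right.2 hαx)

theorem finite_setOf_reflection_mem {W : Subgroup (V ≃ₗᵢ[ℝ] V)} [Finite W] :
    {α : V | ‖α‖ = 1 ∧ (ℝ ∙ α)ᗮ.reflection ∈ W}.Finite := by
  refine ((W : Set (V ≃ₗᵢ[ℝ] V)).toFinite.biUnion fun t _ ↦
    (?_ : {α : V | ‖α‖ = 1 ∧ (ℝ ∙ α)ᗮ.reflection = t}.Finite)).subset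
    fun α hα ↦ Set.mem_biUnion hα.2 ⟨hα.1, rfl⟩
  rcases Set.eq_empty_or_nonempty {α : V | ‖α‖ = 1 ∧ (ℝ ∙ α)ᗮ.reflection = t} with
    h | ⟨α₀, hα₀, rfl⟩
  · rw [h]; exact Set.finite_empty
  · exact (Set.toFinite {α₀, -α₀}).subset
      fun α hα ↦ eq_or_eq_neg_of_reflection_eq hα₀ hα.1 hα.2

namespace IsReflectionGroup

variable {W : Subgroup (V ≃ₗᵢ[ℝ] V)} (hW : IsReflectionGroup W)
include hW

theorem exists_root_mem_orthogonal_fixedSpace {w : V ≃ₗᵢ[ℝ] V} (hw : w ∈ W) (hw1 : w ≠ 1) :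
    ∃ α : V, ‖α‖ = 1 ∧ (ℝ ∙ α)ᗮ.reflection ∈ W ∧ α ∈ (fixedSpace w)ᗮ := by
  have := hW.1
  have hfin := finite_setOf_reflection_mem (W := W)
  by_contra! h
  obtain ⟨x, hx, hreg⟩ := exists_mem_forall_inner_ne_zero (fixedSpace w) hfin
    fun α hα ↦ h α hα.1 hα.2
  have hP : IsPositiveSystem W x (hfin.toFinset.filter (0 < ⟪·, x⟫)) :=
    ⟨fun α ↦ by simp [and_assoc], fun α hα hαW ↦ hreg α ⟨hα, hαW⟩⟩
  exact hw1 (hP.eq_one_of_apply_eq_self hW.2.ge hw hx)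

theorem exists_list_prod_eq_length_le [FiniteDimensional ℝ V] (w : W) :
    ∃ l : List W, l.length ≤ finrank ℝ V - finrank ℝ (fixedSpace (w : V ≃ₗᵢ[ℝ] V)) ∧
      (∀ t ∈ l, IsReflection (t : V ≃ₗᵢ[ℝ] V)) ∧ l.prod = w := by
  by_cases hw1 : w = 1
  · exact ⟨[], by simp, by simp, hw1.symm⟩
  obtain ⟨α, hα, hαW, hαw⟩ := hW.exists_root_mem_orthogonal_fixedSpace w.2 (by simpa using hw1)
  obtain ⟨v, hv⟩ := (range_sub_id_eq_orthogonal_fixedSpace (w : V ≃ₗᵢ[ℝ] V)).ge hαw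
  replace hv : (w : V ≃ₗᵢ[ℝ] V) v - v = α := hv
  have hlt := fixedSpace_lt_fixedSpace_reflection_mul (w : V ≃ₗᵢ[ℝ] V) (v := v) fun h ↦ by
    rw [h, sub_self] at hv
    simp [← hv] at hα
  rw [hv] at hlt
  let t : W := ⟨_, hαW⟩
  have hdim : finrank ℝ (fixedSpace (w : V ≃ₗᵢ[ℝ] V)) <
      finrank ℝ (fixedSpace ((t * w : W) : V ≃ₗᵢ[ℝ] V)) :=
    Submodule.finrank_lt_finrank_of_lt hlt
  have hle := Submodule.finrank_le (fixedSpace ((t * w : W) : V ≃ₗᵢ[ℝ] V))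
  obtain ⟨l, hlen, hl, hprod⟩ := exists_list_prod_eq_length_le (t * w)
  refine ⟨t :: l, by simp only [List.length_cons]; omega,
    List.forall_mem_cons.2 ⟨isReflection_iff.2 ⟨α, hα, rfl⟩, hl⟩, ?_⟩
  rw [List.prod_cons, hprod, ← mul_assoc,
    show t * t = 1 from Subtype.ext (Submodule.reflection_mul_reflection _), one_mul]
termination_by finrank ℝ V - finrank ℝ (fixedSpace (w : V ≃ₗᵢ[ℝ] V))
decreasing_by exact Nat.sub_lt_sub_left (hdim.trans_le hle) hdim

end IsReflectionGroup

variable {W : Subgroup (V ≃ₗᵢ[ℝ] V)} {w : W} {l : List W}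

theorem refLen_le_length (hl : ∀ t ∈ l, IsReflection (t : V ≃ₗᵢ[ℝ] V)) (hw : l.prod = w) :
    refLen W w ≤ l.length :=
  Nat.sInf_le ⟨l, rfl, hl, hw⟩

theorem exists_length_eq_refLen (hl : ∀ t ∈ l, IsReflection (t : V ≃ₗᵢ[ℝ] V))
    (hw : l.prod = w) :
    ∃ l' : List W, l'.length = refLen W w ∧ (∀ t ∈ l', IsReflection (t : V ≃ₗᵢ[ℝ] V)) ∧
      l'.prod = w :=
  Nat.sInf_mem (s := {k | ∃ l : List W, l.length = k ∧ _ ∧ l.prod = w})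
    ⟨l.length, l, rfl, hl, hw⟩

theorem finrank_sub_finrank_fixedSpace_le_length [FiniteDimensional ℝ V]
    (hl : ∀ t ∈ l, IsReflection (t : V ≃ₗᵢ[ℝ] V)) (hw : l.prod = w) :
    finrank ℝ V - finrank ℝ (fixedSpace (w : V ≃ₗᵢ[ℝ] V)) ≤ l.length := by
  have := finrank_le_finrank_fixedSpace_prod_add_length (l.map Subtype.val) (by simpa using hl)
  rw [List.length_map] at this
  rw [← hw, Subgroup.val_list_prod]
  omega

end

/-- For any `w` in a finite real reflection group `W` acting on `V`,
`l_T(w) = dim V - dim F(w)`. -/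
theorem statement3 {V : Type*} [NormedAddCommGroup V] [InnerProductSpace ℝ V]
    [FiniteDimensional ℝ V]
    (W : Subgroup (V ≃ₗᵢ[ℝ] V)) (hW : IsReflectionGroup W) (w : W) :
    refLen W w = Module.finrank ℝ V - Module.finrank ℝ (fixedSpace (w : W).1) := by
  obtain ⟨l, hlen, hl, hw⟩ := hW.exists_list_prod_eq_length_le w
  obtain ⟨l', hlen', hl', hw'⟩ := exists_length_eq_refLen hl hw
  exact le_antisymm ((refLen_le_length hl hw).trans hlen)
    (hlen' ▸ finrank_sub_finrank_fixedSpace_le_length hl' hw')
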